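/- Let 0 < q < 1, let λ > 0 be real, and let ν be a real number with ν > −1. Then for all x > 0, the q-derivative at x of the function G(x) := x^{ν+1}·J_{ν+1}^{(2)}(λx | q²) / ( λ·(−x²λ²(1−q)²; q²)_∞ ) equals x^{ν+1}·J_ν^{(2)}(λx | q²) / (−x²λ²(1−q)²; q²)_∞. -/

import Mathlib

/-!
With `u = λx(1-q)`, `Q = q²` and `a = q^{2ν+2}`, the Bessel function factors as
`J_ν^{(2)}(λx | q²) = c_ν u^ν φ_a(a u²)`, where `φ_a(z) = ∑ (-1)ⁿ Q^{n(n-1)} zⁿ / ((Q;Q)ₙ (a;Q)ₙ)`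
and `c_ν = (a;Q)_∞ / (Q;Q)_∞`, while the weight satisfies `(-u²;Q)_∞ = (1+u²)(-Q u²;Q)_∞`.
After cancelling the weight, the `q`-difference quotient is therefore a multiple of
`φ_{aQ}(aQw) - a(1+w) φ_{aQ}(aQ·Qw)` with `w = u²`, and the coefficientwise contiguous relation
turns this into `(1-a) φ_a(aw)`; the factor `1-a` is absorbed by `c_ν = (1-a) c_{ν+1}`.
-/

/-- The Jackson `q`-derivative `(D_q f)(x) = (f(x) - f(qx)) / ((1-q)x)`. -/
noncomputable def qDeriv (q : ℝ) (f : ℝ → ℝ) (x : ℝ) : ℝ :=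
  (f x - f (q * x)) / ((1 - q) * x)

/-- The finite q-shifted factorial `(z; q)_n`. -/
noncomputable def qPoch (z q : ℝ) (n : ℕ) : ℝ :=
  ∏ k ∈ Finset.range n, (1 - z * q ^ k)

/-- The infinite q-shifted factorial `(z; q)_∞`. -/
noncomputable def qPochInf (z q : ℝ) : ℝ :=
  ∏' k : ℕ, (1 - z * q ^ k)

/-- The second Jackson q-Bessel function in the notation
`J_ν^{(2)}(λx | q²) = J_ν^{(2)}(2λx(1−q); q²)`. -/
noncomputable def J2 (q ν lam x : ℝ) : ℝ :=
  (qPochInf (q ^ (2 * ν + 2)) (q ^ 2) / qPochInf (q ^ 2) (q ^ 2)) *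
    ∑' n : ℕ, ((-1 : ℝ) ^ n * q ^ (2 * (n : ℝ) * ((n : ℝ) + ν)) *
        (lam * x * (1 - q)) ^ (2 * (n : ℝ) + ν)) /
      (qPoch (q ^ 2) (q ^ 2) n *
        ∏ j ∈ Finset.range n, (1 - q ^ (2 * ν + 2 + 2 * (j : ℝ))))

open Finset Filter Topology

namespace QBessel

section QPochhammer

variable {z q : ℝ}

lemma qPoch_succ (z q : ℝ) (n : ℕ) : qPoch z q (n + 1) = qPoch z q n * (1 - z * q ^ n) :=
  prod_range_succ _ n

lemma qPoch_succ' (z q : ℝ) (n : ℕ) : qPoch z q (n + 1) = (1 - z) * qPoch (z * q) q n := by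
  simp only [qPoch, prod_range_succ', pow_zero, mul_one, pow_succ, mul_assoc, mul_comm]

lemma qPoch_ne_zero (hz : ∀ k, z * q ^ k ≠ 1) (n : ℕ) : qPoch z q n ≠ 0 :=
  prod_ne_zero_iff.2 fun k _ => sub_ne_zero.2 (hz k).symm

lemma summable_mul_pow (hq : |q| < 1) (z : ℝ) : Summable fun k : ℕ => z * q ^ k :=
  (summable_geometric_of_abs_lt_one hq).mul_left z

lemma multipliable_one_sub_mul_pow (hq : |q| < 1) (z : ℝ) :
    Multipliable fun k : ℕ => 1 - z * q ^ k := by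
  simpa only [sub_eq_add_neg] using
    Real.multipliable_one_add_of_summable (summable_mul_pow hq z).neg

lemma qPochInf_eq_one_sub_mul (hq : |q| < 1) (z : ℝ) :
    qPochInf z q = (1 - z) * qPochInf (z * q) q := by
  have h : Multipliable fun k : ℕ => 1 - z * q ^ (k + 1) :=
    (multipliable_one_sub_mul_pow hq (z * q)).congr fun k => by ring
  unfold qPochInf
  rw [tprod_eq_zero_mul' (f := fun k => 1 - z * q ^ k) h, pow_zero, mul_one]
  exact congrArg _ (tprod_congr fun k => by ring)

lemma qPochInf_pos (hq : |q| < 1) (hz : ∀ k, z * q ^ k < 1) : 0 < qPochInf z q := by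
  have hlog := Real.summable_log_one_add_of_summable (summable_mul_pow hq z).neg
  simp only [← sub_eq_add_neg] at hlog
  rw [qPochInf, ← Real.rexp_tsum_eq_tprod (fun k => sub_pos.2 (hz k)) hlog]
  exact Real.exp_pos _

end QPochhammer

section Series

noncomputable def besselSeriesTerm (a Q z : ℝ) (n : ℕ) : ℝ :=
  (-1) ^ n * Q ^ (n * (n - 1)) * z ^ n / (qPoch Q Q n * qPoch a Q n)

noncomputable def besselSeries (a Q z : ℝ) : ℝ :=
  ∑' n, besselSeriesTerm a Q z n

variable {a Q : ℝ}

lemma pow_succ_mul_pred (Q : ℝ) (n : ℕ) :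
    Q ^ ((n + 1) * (n + 1 - 1)) = Q ^ (n * (n - 1)) * Q ^ n * Q ^ n := by
  rw [← pow_add, ← pow_add]
  congr 1
  rcases n with _ | n
  · rfl
  · simp only [Nat.add_sub_cancel]
    ring

-- No hypotheses: where a denominator vanishes, both sides are `0` by `x / 0 = 0`.
lemma besselSeriesTerm_succ (a Q z : ℝ) (n : ℕ) :
    besselSeriesTerm a Q z (n + 1) = besselSeriesTerm a Q z n *
      (-(Q ^ n * Q ^ n * z) / ((1 - Q * Q ^ n) * (1 - a * Q ^ n))) := by
  simp only [besselSeriesTerm, qPoch_succ, pow_succ_mul_pred, div_mul_div_comm]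
  ring

lemma summable_besselSeriesTerm (hQ : |Q| < 1) (a z : ℝ) :
    Summable (besselSeriesTerm a Q z) := by
  have hpow : Tendsto (fun n : ℕ => Q ^ n) atTop (𝓝 0) :=
    tendsto_pow_atTop_nhds_zero_of_abs_lt_one hQ
  have hratio : Tendsto (fun n : ℕ => -(Q ^ n * Q ^ n * z) / ((1 - Q * Q ^ n) * (1 - a * Q ^ n)))
      atTop (𝓝 0) := by
    convert ((hpow.mul hpow).mul_const z).neg.div
      (((hpow.const_mul Q).const_sub 1).mul ((hpow.const_mul a).const_sub 1)) (by norm_num)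
      using 2 <;> simp
  refine summable_of_ratio_norm_eventually_le (r := 1 / 2) (by norm_num) ?_
  filter_upwards [hratio.norm.eventually (ge_mem_nhds (by norm_num : ‖(0 : ℝ)‖ < 1 / 2))]
    with n hn
  rw [besselSeriesTerm_succ, norm_mul, mul_comm]
  exact mul_le_mul_of_nonneg_right hn (norm_nonneg _)

end Series

section Contiguous

variable {a Q : ℝ}

lemma pow_succ_ne_one (hQ : |Q| < 1) (k : ℕ) : Q ^ (k + 1) ≠ 1 := by
  have h := pow_lt_one₀ (abs_nonneg Q) hQ k.succ_ne_zero
  rw [← abs_pow] at h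
  exact (abs_lt.1 h).2.ne

lemma besselSeriesTerm_contiguous_succ (hQ : |Q| < 1) (ha : ∀ k, a * Q ^ k ≠ 1) (w : ℝ)
    (n : ℕ) :
    besselSeriesTerm (a * Q) Q (a * Q * w) (n + 1)
        - a * besselSeriesTerm (a * Q) Q (a * Q * (Q * w)) (n + 1)
        - a * w * besselSeriesTerm (a * Q) Q (a * Q * (Q * w)) n
      = (1 - a) * besselSeriesTerm a Q (a * w) (n + 1) := by
  have hQQ : ∀ k, Q * Q ^ k ≠ 1 := fun k => by rw [← pow_succ']; exact pow_succ_ne_one hQ k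
  have haQ : ∀ k, a * Q * Q ^ k ≠ 1 := fun k => by rw [mul_assoc, ← pow_succ']; exact ha (k + 1)
  have h1 := qPoch_ne_zero hQQ n
  have h2 := qPoch_ne_zero haQ n
  have h3 : 1 - Q ^ n * Q ≠ 0 := sub_ne_zero.2 (by rw [mul_comm]; exact (hQQ n).symm)
  have h4 : 1 - Q ^ n * a * Q ≠ 0 := sub_ne_zero.2 (by convert (haQ n).symm using 1; ring)
  have h5 : 1 - a ≠ 0 := sub_ne_zero.2 (by simpa using (ha 0).symm)
  simp only [besselSeriesTerm]
  rw [qPoch_succ' a]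
  simp only [qPoch_succ, pow_succ_mul_pred]
  field_simp
  ring

theorem besselSeries_contiguous (hQ : |Q| < 1) (ha : ∀ k, a * Q ^ k ≠ 1) (w : ℝ) :
    besselSeries (a * Q) Q (a * Q * w) - a * (1 + w) * besselSeries (a * Q) Q (a * Q * (Q * w))
      = (1 - a) * besselSeries a Q (a * w) := by
  set f := besselSeriesTerm (a * Q) Q (a * Q * w)
  set g := besselSeriesTerm (a * Q) Q (a * Q * (Q * w))
  set h := besselSeriesTerm a Q (a * w)
  have hg := summable_besselSeriesTerm hQ (a * Q) (a * Q * (Q * w))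
  have hfg : Summable fun n => f n - a * g n :=
    (summable_besselSeriesTerm hQ _ _).sub (hg.mul_left a)
  have hfg' := (summable_nat_add_iff 1).2 hfg
  have h0 : f 0 - a * g 0 = (1 - a) * h 0 := by simp [f, g, h, besselSeriesTerm, qPoch]
  calc besselSeries (a * Q) Q (a * Q * w) - a * (1 + w) * besselSeries (a * Q) Q (a * Q * (Q * w))
      = (∑' n, (f n - a * g n)) - ∑' n, a * w * g n := by
        rw [besselSeries, besselSeries, (summable_besselSeriesTerm hQ _ _).tsum_sub
          (hg.mul_left a), tsum_mul_left, tsum_mul_left]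
        ring
    _ = (f 0 - a * g 0) + ∑' n, (f (n + 1) - a * g (n + 1) - a * w * g n) := by
        rw [hfg.tsum_eq_zero_add, hfg'.tsum_sub (hg.mul_left _)]
        ring
    _ = (1 - a) * h 0 + ∑' n, (1 - a) * h (n + 1) := by
        rw [h0, tsum_congr (besselSeriesTerm_contiguous_succ hQ ha w)]
    _ = (1 - a) * besselSeries a Q (a * w) := by
        rw [besselSeries, ← tsum_mul_left,
          ((summable_besselSeriesTerm hQ a (a * w)).mul_left _).tsum_eq_zero_add]

end Contiguous

section JacksonBessel

lemma natCast_mul_pred (n : ℕ) : ((n * (n - 1) : ℕ) : ℝ) = n * (n - 1) := by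
  rcases n with _ | n
  · simp
  · push_cast [Nat.add_sub_cancel]
    ring

lemma J2_eq_besselSeries {q μ lam x : ℝ} (hq : 0 < q) (hu : 0 < lam * x * (1 - q)) :
    J2 q μ lam x = qPochInf (q ^ (2 * μ + 2)) (q ^ 2) / qPochInf (q ^ 2) (q ^ 2) *
      ((lam * x * (1 - q)) ^ μ *
        besselSeries (q ^ (2 * μ + 2)) (q ^ 2) (q ^ (2 * μ + 2) * (lam * x * (1 - q)) ^ 2)) := by
  rw [J2, besselSeries]
  congr 1
  rw [← tsum_mul_left]
  refine tsum_congr fun n => ?_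
  generalize lam * x * (1 - q) = u at hu ⊢
  have hsq : ∀ {r : ℝ}, 0 < r → ∀ m : ℕ, r ^ (2 * (m : ℝ)) = (r ^ 2) ^ m := fun hr m => by
    rw [Real.rpow_mul_natCast hr.le, Real.rpow_two]
  have hden : ∏ j ∈ range n, (1 - q ^ (2 * μ + 2 + 2 * (j : ℝ)))
      = qPoch (q ^ (2 * μ + 2)) (q ^ 2) n :=
    prod_congr rfl fun j _ => by rw [Real.rpow_add hq, hsq hq]
  have hexp : 2 * (n : ℝ) * (n + μ) = 2 * ((n * (n - 1) : ℕ) : ℝ) + (2 * μ + 2) * n := by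
    rw [natCast_mul_pred]
    ring
  rw [hden, hexp, Real.rpow_add hq, hsq hq, Real.rpow_mul_natCast hq.le, Real.rpow_add hu, hsq hu,
    besselSeriesTerm, mul_pow]
  ring

lemma qPochInf_neg_pos {z q : ℝ} (hz : 0 ≤ z) (hq0 : 0 ≤ q) (hq1 : q < 1) :
    0 < qPochInf (-z) q :=
  qPochInf_pos (by rwa [abs_of_nonneg hq0]) fun k => by
    have : 0 ≤ z * q ^ k := by positivity
    linarith

lemma qDeriv_weighted_J2_succ {q lam ν x : ℝ} (hq : 0 < q) (hq1 : q < 1) (hlam : 0 < lam)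
    (hx : 0 < x) :
    qDeriv q (fun t => t ^ (ν + 1) * J2 q (ν + 1) lam t /
        (lam * qPochInf (-(t ^ 2 * lam ^ 2 * (1 - q) ^ 2)) (q ^ 2))) x
      = x ^ (ν + 1) * (qPochInf (q ^ (2 * (ν + 1) + 2)) (q ^ 2) / qPochInf (q ^ 2) (q ^ 2)) *
          (lam * x * (1 - q)) ^ ν *
          (besselSeries (q ^ (2 * (ν + 1) + 2)) (q ^ 2)
              (q ^ (2 * (ν + 1) + 2) * (lam * x * (1 - q)) ^ 2)
            - q ^ (2 * ν + 2) * (1 + (lam * x * (1 - q)) ^ 2) *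
              besselSeries (q ^ (2 * (ν + 1) + 2)) (q ^ 2)
                (q ^ (2 * (ν + 1) + 2) * (q ^ 2 * (lam * x * (1 - q)) ^ 2)))
          / qPochInf (-(x ^ 2 * lam ^ 2 * (1 - q) ^ 2)) (q ^ 2) := by
  have hQ : |q ^ 2| < 1 := by rw [abs_of_pos (by positivity)]; nlinarith
  have hu : 0 < lam * x * (1 - q) := mul_pos (mul_pos hlam hx) (by linarith)
  have hqu : lam * (q * x) * (1 - q) = q * (lam * x * (1 - q)) := by ring
  have hXsq : q ^ (ν + 1) * q ^ (ν + 1) = q ^ (2 * ν + 2) := by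
    rw [← Real.rpow_add hq]
    ring_nf
  have hP : qPochInf (-(x ^ 2 * lam ^ 2 * (1 - q) ^ 2)) (q ^ 2) = (1 + (lam * x * (1 - q)) ^ 2) *
      qPochInf (-((q * x) ^ 2 * lam ^ 2 * (1 - q) ^ 2)) (q ^ 2) := by
    rw [qPochInf_eq_one_sub_mul hQ]
    congr 2 <;> ring
  have hPpos := qPochInf_neg_pos (z := (q * x) ^ 2 * lam ^ 2 * (1 - q) ^ 2) (by positivity)
    (by positivity) (by nlinarith : q ^ 2 < 1)
  have h1q : 1 - q ≠ 0 := by linarith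
  rw [qDeriv, J2_eq_besselSeries hq hu, J2_eq_besselSeries hq (hqu ▸ mul_pos hq hu), hqu, hP,
    Real.mul_rpow hq.le hx.le, Real.mul_rpow hq.le hu.le, Real.rpow_add_one hu.ne',
    mul_pow q (lam * x * (1 - q)), ← hXsq]
  field_simp

end JacksonBessel

end QBessel

open QBessel in
/-- `∫ x^{ν+1}/(−x²λ²(1−q)²;q²)_∞ · J_ν^{(2)}(λx|q²) d_q x
  = x^{ν+1} J_{ν+1}^{(2)}(λx|q²)/(λ(−x²λ²(1−q)²;q²)_∞)`. -/
theorem qIntegral_J2_nu (q lam ν : ℝ) (hq : 0 < q) (hq1 : q < 1)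
    (hlam : 0 < lam) (hν : -1 < ν) :
    ∀ x : ℝ, 0 < x →
      qDeriv q
        (fun t => t ^ (ν + 1) * J2 q (ν + 1) lam t /
          (lam * qPochInf (-(t ^ 2 * lam ^ 2 * (1 - q) ^ 2)) (q ^ 2))) x
      = x ^ (ν + 1) * J2 q ν lam x /
          qPochInf (-(x ^ 2 * lam ^ 2 * (1 - q) ^ 2)) (q ^ 2) := by
  intro x hx
  have hQ : |q ^ 2| < 1 := by rw [abs_of_pos (by positivity)]; nlinarith
  have hX : q ^ (2 * (ν + 1) + 2) = q ^ (2 * ν + 2) * q ^ 2 := by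
    rw [← Real.rpow_natCast, ← Real.rpow_add hq]
    ring_nf
  have ha : ∀ k : ℕ, q ^ (2 * ν + 2) * (q ^ 2) ^ k ≠ 1 := fun k =>
    (mul_lt_one_of_nonneg_of_lt_one_left (by positivity) (Real.rpow_lt_one hq.le hq1 (by linarith))
      (pow_le_one₀ (by positivity) (by nlinarith))).ne
  rw [qDeriv_weighted_J2_succ hq hq1 hlam hx, hX, besselSeries_contiguous hQ ha,
    J2_eq_besselSeries hq (mul_pos (mul_pos hlam hx) (by linarith)),
    qPochInf_eq_one_sub_mul hQ (q ^ (2 * ν + 2))]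
  ring
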